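/- Let a > 0 and 0 < Δt ≤ 2/√a. The complex eigenvalues of the 2×2 matrix M^IMEX = [[1, -Δt a], [Δt, 1 - Δt² a]] are λ = (2 - Δt² a)/2 ± (i/2)·√(Δt² a (4 - Δt² a)), and every eigenvalue satisfies |λ| = 1. -/

import Mathlib

open Matrix Complex

/-! `M^IMEX` has determinant `1` and trace `t = 2 - Δt² a`, so its characteristic polynomial is
`z² - t z + 1`. The step-size bound gives `t² ≤ 4`, so with `s = √(4 - t²)` the roots are the
conjugate pair `(t ± i s)/2`, and `t² + s² = 4` puts both on the unit circle. -/

theorem Matrix.mem_spectrum_fin_two_iff {K : Type*} [Field K] (M : Matrix (Fin 2) (Fin 2) K)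
    (z : K) : z ∈ spectrum K M ↔ z ^ 2 - M.trace * z + M.det = 0 := by
  rw [spectrum.mem_iff, isUnit_iff_isUnit_det, isUnit_iff_ne_zero, not_ne_iff,
    Algebra.algebraMap_eq_smul_one, det_fin_two, det_fin_two, trace_fin_two]
  simp only [sub_apply, smul_apply, one_apply_eq, one_apply_ne one_ne_zero.symm,
    one_apply_ne one_ne_zero, smul_eq_mul, mul_one, mul_zero]
  constructor <;> intro h <;> linear_combination h

theorem Complex.sq_sub_mul_add_one_eq_zero_iff {t s : ℝ} (hts : t ^ 2 + s ^ 2 = 4) (z : ℂ) :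
    z ^ 2 - t * z + 1 = 0 ↔
      z = ((t / 2 : ℝ) : ℂ) + I / 2 * s ∨ z = ((t / 2 : ℝ) : ℂ) - I / 2 * s := by
  have hts' : (t : ℂ) ^ 2 + (s : ℂ) ^ 2 = 4 := by exact_mod_cast hts
  have hfactor : z ^ 2 - t * z + 1
      = (z - (((t / 2 : ℝ) : ℂ) + I / 2 * s)) * (z - (((t / 2 : ℝ) : ℂ) - I / 2 * s)) := by
    push_cast
    linear_combination ((s : ℂ) ^ 2 / 4) * I_sq - hts' / 4
  rw [hfactor, mul_eq_zero, sub_eq_zero, sub_eq_zero]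

theorem Complex.norm_half_add_I_half_mul_eq_one {t s : ℝ} (hts : t ^ 2 + s ^ 2 = 4) :
    ‖((t / 2 : ℝ) : ℂ) + I / 2 * s‖ = 1 := by
  rw [show I / 2 * (s : ℂ) = ((s / 2 : ℝ) : ℂ) * I by push_cast; ring, norm_add_mul_I,
    Real.sqrt_eq_one]
  linear_combination hts / 4

theorem Complex.norm_half_sub_I_half_mul_eq_one {t s : ℝ} (hts : t ^ 2 + s ^ 2 = 4) :
    ‖((t / 2 : ℝ) : ℂ) - I / 2 * s‖ = 1 := by
  rw [← norm_half_add_I_half_mul_eq_one hts, ← norm_conj]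
  congr 1
  simp only [map_sub, map_mul, map_div₀, conj_ofReal, conj_I, map_ofNat]
  ring

/-- For `a > 0`, `0 < Δt ≤ 2/√a`, the eigenvalues of
`M^IMEX = [[1, -Δt a], [Δt, 1 - Δt² a]]` are `(2 - Δt² a)/2 ± (i/2)√(Δt² a (4 - Δt² a))`,
and every eigenvalue has modulus exactly 1. -/
theorem stmt3 (a Δt : ℝ) (ha : 0 < a) (hΔt : 0 < Δt) (hΔt2 : Δt ≤ 2 / Real.sqrt a)
    (M : Matrix (Fin 2) (Fin 2) ℂ)
    (hM : M = !![(1 : ℂ), -(Δt * a : ℝ); (Δt : ℝ), ((1 - Δt ^ 2 * a : ℝ) : ℂ)]) :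
    spectrum ℂ M =
      {((2 - Δt ^ 2 * a) / 2 : ℝ) + Complex.I / 2 * Real.sqrt (Δt ^ 2 * a * (4 - Δt ^ 2 * a)),
       ((2 - Δt ^ 2 * a) / 2 : ℝ) - Complex.I / 2 * Real.sqrt (Δt ^ 2 * a * (4 - Δt ^ 2 * a))}
    ∧ ∀ lam ∈ spectrum ℂ M, ‖lam‖ = 1 := by
  have hsqrt_a : 0 < √a := Real.sqrt_pos.2 ha
  have hΔt_sq_mul_le : Δt ^ 2 * a ≤ 4 := by
    have h : Δt * √a ≤ 2 := (le_div_iff₀ hsqrt_a).1 hΔt2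
    nlinarith [Real.sq_sqrt ha.le, mul_nonneg hΔt.le hsqrt_a.le]
  have hts : (2 - Δt ^ 2 * a) ^ 2 + √(Δt ^ 2 * a * (4 - Δt ^ 2 * a)) ^ 2 = 4 := by
    rw [Real.sq_sqrt (mul_nonneg (by positivity) (by linarith))]
    ring
  have htrace : M.trace = ((2 - Δt ^ 2 * a : ℝ) : ℂ) := by
    rw [hM, trace_fin_two]; simp; ring
  have hdet : M.det = 1 := by
    rw [hM, det_fin_two]; simp; ring
  have hmem (z : ℂ) : z ∈ spectrum ℂ M ↔
      z = ((2 - Δt ^ 2 * a) / 2 : ℝ) + I / 2 * √(Δt ^ 2 * a * (4 - Δt ^ 2 * a)) ∨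
        z = ((2 - Δt ^ 2 * a) / 2 : ℝ) - I / 2 * √(Δt ^ 2 * a * (4 - Δt ^ 2 * a)) := by
    rw [M.mem_spectrum_fin_two_iff, htrace, hdet]
    exact sq_sub_mul_add_one_eq_zero_iff hts z
  refine ⟨Set.ext hmem, fun lam hlam => ?_⟩
  rcases (hmem lam).1 hlam with rfl | rfl
  · exact norm_half_add_I_half_mul_eq_one hts
  · exact norm_half_sub_I_half_mul_eq_one hts
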